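/- Let V be a quadratic vector space, C ∈ SO(V) with det(C − I) ≠ 0, and D ∈ o(V) invertible with CD = DC. Set E₁ = (1/2)(C+I)(C−I)⁻¹ − D⁻¹, E₂ = D⁻²((C − C⁻¹)/2 − D), and R = D(I − C⁻¹)⁻¹. Then E₁, E₂ ∈ o(V), R ∈ GL(V), all three commute with C and D, and the block matrix identity ι(C) = [[I,0],[E₁,I]]·[[I,D],[0,I]]·[[I,0],[E₂,I]]·[[R,0],[0,(R⁻¹)ᵗ]] holds, where ι(C) = [[(C+I)/2, C−I],[(C−I)/4, (C+I)/2]]. -/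

import Mathlib

/-!
Everything takes place in the bicommutant of `{C, D}`: a commutative subalgebra of `End V` that
contains `C`, `D` and the inverses of all its units. There the block identity for `ι(C)` is a
computation with commuting units, whose core is `E₂ R = ½ (C + 1) D⁻¹ − C (C − 1)⁻¹`.

For skewness, `E₁` is half the Cayley transform `(C + 1)(C − 1)⁻¹` of the orthogonal map `C`,
which is skew, minus the skew map `D⁻¹`; and `E₂` is the self-adjoint `D⁻²` times the skew map
`½ (C − C⁻¹) − D`, with which it commutes. Finally `Cᵗ = C⁻¹` and `Dᵗ = −D` give
`(R⁻¹)ᵗ = ((1 − C⁻¹) D⁻¹)ᵗ = (C − 1) D⁻¹`.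
-/

open Module

variable {V : Type*} [AddCommGroup V] [Module ℝ V]

/-- `E₁ = (1/2)(C+I)(C−I)⁻¹ − D⁻¹`. -/
noncomputable def matE₁ (C D : Module.End ℝ V) : Module.End ℝ V :=
  (1 / 2 : ℝ) • ((C + 1) * Ring.inverse (C - 1)) - Ring.inverse D

/-- `E₂ = D⁻²((C − C⁻¹)/2 − D)`. -/
noncomputable def matE₂ (C D : Module.End ℝ V) : Module.End ℝ V :=
  Ring.inverse (D * D) * ((1 / 2 : ℝ) • (C - Ring.inverse C) - D)

/-- `R = D(I − C⁻¹)⁻¹`. -/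
noncomputable def matR (C D : Module.End ℝ V) : Module.End ℝ V :=
  D * Ring.inverse (1 - Ring.inverse C)

open scoped Ring IsMulCommutative
open LinearMap (IsAdjointPair IsOrthogonal)

section RingInverse

theorem Commute.ringInverse_right {M₀ : Type*} [MonoidWithZero M₀] {a b : M₀}
    (h : Commute a b) : Commute a b⁻¹ʳ := by
  by_cases hb : IsUnit b
  · obtain ⟨u, rfl⟩ := hb
    rw [Ring.inverse_unit]
    exact h.units_inv_right
  · rw [Ring.inverse_non_unit _ hb]
    exact Commute.zero_right a

theorem Commute.ringInverse_left {M₀ : Type*} [MonoidWithZero M₀] {a b : M₀}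
    (h : Commute a b) : Commute a⁻¹ʳ b :=
  h.symm.ringInverse_right.symm

variable {R : Type*} [Ring R]

theorem Ring.inverse_neg (a : R) : (-a)⁻¹ʳ = -a⁻¹ʳ := by
  by_cases ha : IsUnit a
  · obtain ⟨u, rfl⟩ := ha
    rw [← Units.val_neg, Ring.inverse_unit, Ring.inverse_unit, inv_neg, Units.val_neg]
  · rw [Ring.inverse_non_unit _ ha, Ring.inverse_non_unit _ (by rwa [IsUnit.neg_iff]), neg_zero]

theorem Ring.one_sub_inverse_eq_sub_one_mul {c : R} (hc : IsUnit c) :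
    1 - c⁻¹ʳ = (c - 1) * c⁻¹ʳ := by
  rw [sub_mul, one_mul, Ring.mul_inverse_cancel c hc]

theorem Ring.isUnit_one_sub_inverse {c : R} (hc : IsUnit c) (hc1 : IsUnit (c - 1)) :
    IsUnit (1 - c⁻¹ʳ) := by
  rw [Ring.one_sub_inverse_eq_sub_one_mul hc]
  exact hc1.mul hc.ringInverse

theorem Ring.inverse_one_sub_inverse {c : R} (hc : IsUnit c) :
    (1 - c⁻¹ʳ)⁻¹ʳ = c * (c - 1)⁻¹ʳ := by
  rw [Ring.one_sub_inverse_eq_sub_one_mul hc, Ring.inverse_mul (.inr hc.ringInverse),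
    Ring.inverse_inverse hc]

end RingInverse

namespace Subalgebra

variable {R A : Type*} [CommRing R] [Ring A] [Algebra R A] {s : Set A}

theorem ringInverse_mem_centralizer {x : A} (hx : x ∈ centralizer R s) :
    x⁻¹ʳ ∈ centralizer R s :=
  (mem_centralizer_iff R).mpr fun y hy =>
    Commute.ringInverse_right ((mem_centralizer_iff R).mp hx y hy)

theorem coe_centralizer_ringInverse (x : centralizer R s) :
    ((x⁻¹ʳ : centralizer R s) : A) = (x : A)⁻¹ʳ := by
  by_cases hx : IsUnit (x : A)
  · let y : centralizer R s := ⟨(x : A)⁻¹ʳ, ringInverse_mem_centralizer x.2⟩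
    have hxy : x * y = 1 := Subtype.ext (Ring.mul_inverse_cancel _ hx)
    have hyx : y * x = 1 := Subtype.ext (Ring.inverse_mul_cancel _ hx)
    rw [show x = ((⟨x, y, hxy, hyx⟩ : (centralizer R s)ˣ) : centralizer R s) from rfl,
      Ring.inverse_unit]
    rfl
  · have : ¬IsUnit x := fun h => hx (h.map (centralizer R s).val)
    rw [Ring.inverse_non_unit _ this, Ring.inverse_non_unit _ hx]
    rfl

theorem isUnit_coe_centralizer_iff (x : centralizer R s) : IsUnit (x : A) ↔ IsUnit x := by
  rw [Ring.isUnit_iff_mul_inverse_cancel, Ring.isUnit_iff_mul_inverse_cancel,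
    ← coe_centralizer_ringInverse, ← Subalgebra.coe_mul, ← Subalgebra.coe_one (centralizer R s),
    Subtype.coe_inj]

theorem isMulCommutative_centralizer_centralizer (hs : ∀ x ∈ s, ∀ y ∈ s, x * y = y * x) :
    IsMulCommutative (centralizer R s.centralizer) :=
  .of_setLike_mul_comm fun _ h₁ _ h₂ => Set.centralizer_centralizer_comm_of_comm hs _ h₁ _ h₂

end Subalgebra

theorem Matrix.map_fin_two {α β : Type*} (f : α → β) (a b c d : α) :
    (!![a, b; c, d]).map f = !![f a, f b; f c, f d] := by
  ext i j
  fin_cases i <;> fin_cases j <;> rfl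

theorem iotaMatrix_factorization_of_isMulCommutative {A : Type*} [Ring A] [IsMulCommutative A]
    [Algebra ℝ A] {c d : A}
    (hc : IsUnit c) (hc1 : IsUnit (c - 1)) (hd : IsUnit d) :
    (!![(1 / 2 : ℝ) • (c + 1), c - 1; (1 / 4 : ℝ) • (c - 1), (1 / 2 : ℝ) • (c + 1)] :
        Matrix (Fin 2) (Fin 2) A) =
      !![1, 0; (1 / 2 : ℝ) • ((c + 1) * (c - 1)⁻¹ʳ) - d⁻¹ʳ, 1] * !![1, d; 0, 1] *
        !![1, 0; (d * d)⁻¹ʳ * ((1 / 2 : ℝ) • (c - c⁻¹ʳ) - d), 1] *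
        !![d * (1 - c⁻¹ʳ)⁻¹ʳ, 0; 0, (c - 1) * d⁻¹ʳ] := by
  rw [Ring.inverse_mul (.inl hd), Ring.inverse_one_sub_inverse hc]
  have hq : algebraMap ℝ A (1 / 4) = algebraMap ℝ A (1 / 2) * algebraMap ℝ A (1 / 2) := by
    rw [← map_mul]; norm_num
  simp only [Algebra.smul_def, hq, Matrix.mul_fin_two, mul_one, one_mul, mul_zero, add_zero,
    zero_add]
  set h := algebraMap ℝ A (1 / 2)
  have hh : h * 2 = 1 := by
    rw [← map_ofNat (algebraMap ℝ A) 2, ← map_mul]; norm_num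
  set c' := c⁻¹ʳ
  set u := (c - 1)⁻¹ʳ
  set d' := d⁻¹ʳ
  have hcc : c * c' = 1 := Ring.mul_inverse_cancel c hc
  have huu : (c - 1) * u = 1 := Ring.mul_inverse_cancel _ hc1
  have hdd : d * d' = 1 := Ring.mul_inverse_cancel d hd
  set e₁ := h * ((c + 1) * u) - d'
  set e₂ := d' * d' * (h * (c - c') - d)
  set r := d * (c * u)
  have he₂r : e₂ * r = h * (c + 1) * d' - c * u :=
    calc e₂ * r = d' * (h * ((c - c') * c * u) - d * c * u) * (d * d') := by ring
      _ = d' * (h * (c + 1) - d * c * u) := by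
        rw [hdd, show (c - c') * c * u = c + 1 by linear_combination (c + 1) * huu - u * hcc]
        ring
      _ = h * (c + 1) * d' - c * u := by linear_combination -(c * u) * hdd
  have h₀₀ : (1 + d * e₂) * r = h * (c + 1) := by
    linear_combination d * he₂r + h * (c + 1) * hdd
  have h₁₀ : (e₁ + (e₁ * d + 1) * e₂) * r = h * h * (c - 1) :=
    calc (e₁ + (e₁ * d + 1) * e₂) * r = e₁ * ((1 + d * e₂) * r) + e₂ * r := by ring
      _ = h * h * (c - 1) := by
        rw [h₀₀, he₂r]
        linear_combination h ^ 2 * (c - 1) * huu + c * u * (2 * h + 1) * hh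
  have h₀₁ : d * ((c - 1) * d') = c - 1 := by linear_combination (c - 1) * hdd
  have h₁₁ : (e₁ * d + 1) * ((c - 1) * d') = h * (c + 1) := by
    linear_combination h * (c + 1) * d * d' * huu + (h * (c + 1) - (c - 1) * d') * hdd
  rw [h₀₀, h₁₀, h₀₁, h₁₁]

theorem iotaMatrix_factorization_of_commute {C D : Module.End ℝ V} (hCD : Commute C D)
    (hC : IsUnit C) (hC1 : IsUnit (C - 1)) (hD : IsUnit D) :
    (!![(1 / 2 : ℝ) • (C + 1), C - 1; (1 / 4 : ℝ) • (C - 1), (1 / 2 : ℝ) • (C + 1)] :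
        Matrix (Fin 2) (Fin 2) (Module.End ℝ V)) =
      !![1, 0; matE₁ C D, 1] * !![1, D; 0, 1] * !![1, 0; matE₂ C D, 1] *
        !![matR C D, 0; 0, (C - 1) * D⁻¹ʳ] := by
  have : IsMulCommutative (Subalgebra.centralizer ℝ (Set.centralizer {C, D})) :=
    Subalgebra.isMulCommutative_centralizer_centralizer (by
      simp only [Set.mem_insert_iff, Set.mem_singleton_iff]
      rintro x (rfl | rfl) y (rfl | rfl) <;> first | rfl | exact hCD | exact hCD.symm)
  let c : Subalgebra.centralizer ℝ (Set.centralizer {C, D}) :=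
    ⟨C, Set.subset_centralizer_centralizer (by simp)⟩
  let d : Subalgebra.centralizer ℝ (Set.centralizer {C, D}) :=
    ⟨D, Set.subset_centralizer_centralizer (by simp)⟩
  have key := congrArg (Subalgebra.val _).mapMatrix <|
    iotaMatrix_factorization_of_isMulCommutative (c := c) (d := d)
      ((Subalgebra.isUnit_coe_centralizer_iff c).mp hC)
      ((Subalgebra.isUnit_coe_centralizer_iff (c - 1)).mp hC1)
      ((Subalgebra.isUnit_coe_centralizer_iff d).mp hD)
  simp only [map_mul, AlgHom.mapMatrix_apply, Matrix.map_fin_two, Subalgebra.coe_val] at key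
  push_cast [Subalgebra.coe_centralizer_ringInverse] at key
  exact key

namespace Module.End

variable {R M : Type*} [Semiring R] [AddCommMonoid M] [Module R M] {f : Module.End R M}

theorem apply_ringInverse_apply (hf : IsUnit f) (x : M) : f (f⁻¹ʳ x) = x := by
  rw [← mul_apply, Ring.mul_inverse_cancel f hf, one_apply]

theorem ringInverse_apply_apply (hf : IsUnit f) (x : M) : f⁻¹ʳ (f x) = x := by
  rw [← mul_apply, Ring.inverse_mul_cancel f hf, one_apply]

end Module.End

section Adjoint

variable {R M : Type*} [CommRing R] [AddCommGroup M] [Module R M] {B : LinearMap.BilinForm R M}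

theorem LinearMap.IsAdjointPair.ringInverse {f g : Module.End R M} (h : IsAdjointPair B B f g)
    (hf : IsUnit f) (hg : IsUnit g) :
    IsAdjointPair B B (f⁻¹ʳ : Module.End R M) (g⁻¹ʳ : Module.End R M) := fun x y =>
  calc B (f⁻¹ʳ x) y = B (f⁻¹ʳ x) (g (g⁻¹ʳ y)) := by rw [Module.End.apply_ringInverse_apply hg]
    _ = B x (g⁻¹ʳ y) := by rw [← h, Module.End.apply_ringInverse_apply hf]

theorem LinearMap.IsAdjointPair.mul_of_commute {P S : Module.End R M} (hP : IsAdjointPair B B P P)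
    (hS : IsAdjointPair B B S (-S : Module.End R M)) (hPS : Commute P S) :
    IsAdjointPair B B (P * S) (-(P * S) : Module.End R M) := by
  simpa only [neg_mul, hPS.eq] using hP.mul hS

theorem LinearMap.IsAdjointPair.ringInverse_of_neg {D : Module.End R M}
    (hD : IsAdjointPair B B D (-D : Module.End R M)) (hDu : IsUnit D) :
    IsAdjointPair B B (D⁻¹ʳ : Module.End R M) (-D⁻¹ʳ : Module.End R M) := by
  simpa only [Ring.inverse_neg] using hD.ringInverse hDu hDu.neg

theorem LinearMap.IsOrthogonal.isAdjointPair_ringInverse {C : Module.End R M}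
    (hC : IsOrthogonal B C) (hCu : IsUnit C) : IsAdjointPair B B C (C⁻¹ʳ : Module.End R M) :=
  fun x y => by rw [← hC x, Module.End.apply_ringInverse_apply hCu]

theorem LinearMap.IsOrthogonal.isAdjointPair_cayley {C : Module.End R M} (hC : IsOrthogonal B C)
    (hC1 : IsUnit (C - 1)) :
    IsAdjointPair B B ((C + 1) * (C - 1)⁻¹ʳ) (-((C + 1) * (C - 1)⁻¹ʳ) : Module.End R M) := by
  have cayley_apply (a : M) : ((C + 1) * (C - 1)⁻¹ʳ) ((C - 1) a) = C a + a := by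
    rw [Module.End.mul_apply, Module.End.ringInverse_apply_apply hC1]; rfl
  intro x y
  obtain ⟨a, rfl⟩ : ∃ a, (C - 1) a = x := ⟨_, Module.End.apply_ringInverse_apply hC1 x⟩
  obtain ⟨b, rfl⟩ : ∃ b, (C - 1) b = y := ⟨_, Module.End.apply_ringInverse_apply hC1 y⟩
  -- expanding both sides, the terms `B (C a) (C b)` and `B a b` cancel by orthogonality
  rw [LinearMap.neg_apply, cayley_apply, cayley_apply]
  simp only [LinearMap.sub_apply, Module.End.one_apply, map_add, map_sub, map_neg,
    LinearMap.add_apply, hC a b]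
  ring

end Adjoint

section BlockFactors

variable {C D X : Module.End ℝ V}

theorem isUnit_matR (hC : IsUnit C) (hC1 : IsUnit (C - 1)) (hD : IsUnit D) : IsUnit (matR C D) :=
  hD.mul (Ring.isUnit_one_sub_inverse hC hC1).ringInverse

theorem commute_matE₁ (hC : Commute C X) (hD : Commute D X) : Commute (matE₁ C D) X :=
  (((hC.add_left (Commute.one_left X)).mul_left
    (hC.sub_left (Commute.one_left X)).ringInverse_left).smul_left _).sub_left hD.ringInverse_left

theorem commute_matE₂ (hC : Commute C X) (hD : Commute D X) : Commute (matE₂ C D) X :=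
  (hD.mul_left hD).ringInverse_left.mul_left
    (((hC.sub_left hC.ringInverse_left).smul_left _).sub_left hD)

theorem commute_matR (hC : Commute C X) (hD : Commute D X) : Commute (matR C D) X :=
  hD.mul_left ((Commute.one_left X).sub_left hC.ringInverse_left).ringInverse_left

variable {B : LinearMap.BilinForm ℝ V}

theorem isAdjointPair_matE₁ (hC : IsOrthogonal B C) (hC1 : IsUnit (C - 1))
    (hD : IsAdjointPair B B D (-D : Module.End ℝ V)) (hDu : IsUnit D) :
    IsAdjointPair B B (matE₁ C D) (-matE₁ C D : Module.End ℝ V) := by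
  have h : IsAdjointPair B B (matE₁ C D)
      ((1 / 2 : ℝ) • -((C + 1) * (C - 1)⁻¹ʳ) - -D⁻¹ʳ : Module.End ℝ V) :=
    ((hC.isAdjointPair_cayley hC1).smul (1 / 2 : ℝ)).sub (hD.ringInverse_of_neg hDu)
  rwa [show -matE₁ C D = (1 / 2 : ℝ) • -((C + 1) * (C - 1)⁻¹ʳ) - -D⁻¹ʳ by rw [matE₁]; module]

theorem isAdjointPair_matE₂ (hC : IsOrthogonal B C) (hCu : IsUnit C)
    (hD : IsAdjointPair B B D (-D : Module.End ℝ V)) (hDu : IsUnit D) (hCD : Commute C D) :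
    IsAdjointPair B B (matE₂ C D) (-matE₂ C D : Module.End ℝ V) := by
  have hCC := hC.isAdjointPair_ringInverse hCu
  have hCinvC : IsAdjointPair B B (C⁻¹ʳ : Module.End ℝ V) C := by
    simpa only [Ring.inverse_inverse hCu] using hCC.ringInverse hCu hCu.ringInverse
  have hDD : IsAdjointPair B B ((D * D)⁻¹ʳ : Module.End ℝ V) ((D * D)⁻¹ʳ : Module.End ℝ V) := by
    simpa only [neg_mul_neg] using (hD.mul hD).ringInverse (hDu.mul hDu) (hDu.neg.mul hDu.neg)
  have hS : IsAdjointPair B B ((1 / 2 : ℝ) • (C - C⁻¹ʳ) - D)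
      (-((1 / 2 : ℝ) • (C - C⁻¹ʳ) - D) : Module.End ℝ V) := by
    have h : IsAdjointPair B B ((1 / 2 : ℝ) • (C - C⁻¹ʳ) - D)
        ((1 / 2 : ℝ) • (C⁻¹ʳ - C) - -D : Module.End ℝ V) :=
      ((hCC.sub hCinvC).smul (1 / 2 : ℝ)).sub hD
    rwa [show (1 / 2 : ℝ) • (C⁻¹ʳ - C) - -D = -((1 / 2 : ℝ) • (C - C⁻¹ʳ) - D) by module] at h
  refine hDD.mul_of_commute hS ?_
  have hDS : Commute D ((1 / 2 : ℝ) • (C - C⁻¹ʳ) - D) :=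
    ((hCD.symm.sub_right hCD.symm.ringInverse_right).smul_right _).sub_right (.refl D)
  exact (hDS.mul_left hDS).ringInverse_left

theorem transpose_ringInverse_matR (hB : B.Nondegenerate) {t : Module.End ℝ V → Module.End ℝ V}
    (ht : ∀ (T : Module.End ℝ V) (x y : V), B (t T x) y = B x (T y))
    (hC : IsOrthogonal B C) (hCu : IsUnit C) (hC1 : IsUnit (C - 1))
    (hD : IsAdjointPair B B D (-D : Module.End ℝ V)) (hDu : IsUnit D) (hCD : Commute C D) :
    t (matR C D)⁻¹ʳ = (C - 1) * D⁻¹ʳ := by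
  refine LinearMap.BilinForm.isAdjointPair_unique_of_nondegenerate B hB _ _ _ (ht _) ?_
  have hRinv : (matR C D)⁻¹ʳ = (1 - C⁻¹ʳ) * D⁻¹ʳ := by
    rw [matR, Ring.inverse_mul (.inl hDu),
      Ring.inverse_inverse (Ring.isUnit_one_sub_inverse hCu hC1)]
  have hC1adj : IsAdjointPair B B (C - 1 : Module.End ℝ V) (C⁻¹ʳ - 1 : Module.End ℝ V) :=
    (hC.isAdjointPair_ringInverse hCu).sub LinearMap.isAdjointPair_one
  have h := hC1adj.mul (hD.ringInverse_of_neg hDu)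
  have e : -D⁻¹ʳ * (C⁻¹ʳ - 1) = (1 - C⁻¹ʳ) * D⁻¹ʳ := by
    rw [← ((Commute.one_right _).sub_right hCD.ringInverse_ringInverse.symm).eq]
    noncomm_ring
  rwa [hRinv, ← e]

end BlockFactors

theorem iota_factorization_general [FiniteDimensional ℝ V]
    (B : LinearMap.BilinForm ℝ V)
    (hB : B.Nondegenerate)
    (t : Module.End ℝ V → Module.End ℝ V)
    (ht : ∀ (T : Module.End ℝ V) (x y : V), B (t T x) y = B x (T y))
    (C D : Module.End ℝ V)
    (hCO : ∀ x y, B (C x) (C y) = B x y) (hCdet : LinearMap.det C = 1)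
    (hC1 : LinearMap.det (C - 1) ≠ 0)
    (hDskew : ∀ x y, B (D x) y = - B x (D y)) (hD : IsUnit D)
    (hCD : C * D = D * C) :
    (∀ x y, B (matE₁ C D x) y = - B x (matE₁ C D y)) ∧
    (∀ x y, B (matE₂ C D x) y = - B x (matE₂ C D y)) ∧
    IsUnit (matR C D) ∧
    (matE₁ C D * C = C * matE₁ C D ∧ matE₁ C D * D = D * matE₁ C D) ∧
    (matE₂ C D * C = C * matE₂ C D ∧ matE₂ C D * D = D * matE₂ C D) ∧
    (matR C D * C = C * matR C D ∧ matR C D * D = D * matR C D) ∧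
    (!![(1 / 2 : ℝ) • (C + 1), C - 1; (1 / 4 : ℝ) • (C - 1), (1 / 2 : ℝ) • (C + 1)]
        : Matrix (Fin 2) (Fin 2) (Module.End ℝ V)) =
      !![1, 0; matE₁ C D, 1] * !![1, D; 0, 1] * !![1, 0; matE₂ C D, 1] *
        !![matR C D, 0; 0, t (Ring.inverse (matR C D))] := by
  have hCu : IsUnit C := (LinearMap.isUnit_iff_isUnit_det C).mpr (hCdet ▸ isUnit_one)
  have hC1u : IsUnit (C - 1) := (LinearMap.isUnit_iff_isUnit_det _).mpr (isUnit_iff_ne_zero.mpr hC1)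
  have hDadj : IsAdjointPair B B D (-D : Module.End ℝ V) := fun x y => by
    rw [hDskew, LinearMap.neg_apply, map_neg]
  have hCD : Commute C D := hCD
  refine ⟨fun x y => by simpa using isAdjointPair_matE₁ hCO hC1u hDadj hD x y,
    fun x y => by simpa using isAdjointPair_matE₂ hCO hCu hDadj hD hCD x y,
    isUnit_matR hCu hC1u hD,
    ⟨(commute_matE₁ (.refl C) hCD.symm).eq, (commute_matE₁ hCD (.refl D)).eq⟩,
    ⟨(commute_matE₂ (.refl C) hCD.symm).eq, (commute_matE₂ hCD (.refl D)).eq⟩,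
    ⟨(commute_matR (.refl C) hCD.symm).eq, (commute_matR hCD (.refl D)).eq⟩, ?_⟩
  rw [transpose_ringInverse_matR hB ht hCO hCu hC1u hDadj hD hCD]
  exact iotaMatrix_factorization_of_commute hCD hCu hC1u hD

/-- Factorization of `ι(C) = [[(C+I)/2, C−I],[(C−I)/4, (C+I)/2]]`:  for `C ∈ SO(V)` with
`det(C−I) ≠ 0` and `D ∈ o(V)` invertible commuting with `C`, the elements
`E₁, E₂` are `B`-skew-adjoint, `R` is invertible, all three commute with `C` and `D`, and
`ι(C) = [[I,0],[E₁,I]]·[[I,D],[0,I]]·[[I,0],[E₂,I]]·[[R,0],[0,(R⁻¹)ᵗ]]`,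
where `ᵗ` is the `B`-adjoint. -/
theorem iota_factorization [FiniteDimensional ℝ V]
    (B : LinearMap.BilinForm ℝ V) (hBsym : ∀ x y, B x y = B y x)
    (hB : B.Nondegenerate)
    (t : Module.End ℝ V → Module.End ℝ V)
    (ht : ∀ (T : Module.End ℝ V) (x y : V), B (t T x) y = B x (T y))
    (C D : Module.End ℝ V)
    (hCO : ∀ x y, B (C x) (C y) = B x y) (hCdet : LinearMap.det C = 1)
    (hC1 : LinearMap.det (C - 1) ≠ 0)
    (hDskew : ∀ x y, B (D x) y = - B x (D y)) (hD : IsUnit D)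
    (hCD : C * D = D * C) :
    (∀ x y, B (matE₁ C D x) y = - B x (matE₁ C D y)) ∧
    (∀ x y, B (matE₂ C D x) y = - B x (matE₂ C D y)) ∧
    IsUnit (matR C D) ∧
    (matE₁ C D * C = C * matE₁ C D ∧ matE₁ C D * D = D * matE₁ C D) ∧
    (matE₂ C D * C = C * matE₂ C D ∧ matE₂ C D * D = D * matE₂ C D) ∧
    (matR C D * C = C * matR C D ∧ matR C D * D = D * matR C D) ∧
    (!![(1 / 2 : ℝ) • (C + 1), C - 1; (1 / 4 : ℝ) • (C - 1), (1 / 2 : ℝ) • (C + 1)]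
        : Matrix (Fin 2) (Fin 2) (Module.End ℝ V)) =
      !![1, 0; matE₁ C D, 1] * !![1, D; 0, 1] * !![1, 0; matE₂ C D, 1] *
        !![matR C D, 0; 0, t (Ring.inverse (matR C D))] :=
  iota_factorization_general B hB t ht C D hCO hCdet hC1 hDskew hD hCD
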